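/- arXiv:2509.06563 — 5 statements merged into one kernel-verified Lean document; each statement's English description precedes it below -/
import Mathlib

section
/- Let (a,b) ∈ ℝ² and c ∈ ℝ. There exists a future-directed causal Lipschitz curve γ : [0,1] → ℝ² with γ(0) = (0,0), γ(1) = (a,b) and signed area A(γ) = c if and only if a > 0 and −a² + b² + 4|c| ≤ 0. -/
/-!
In the null coordinates `u = x + y`, `v = x - y` a future-directed causal curve has `u' ≥ 0` and
`v' ≥ 0` almost everywhere, so `u` and `v` increase from `0` to `a + b` and to `a - b`, and `a > 0`
because `x' > 0`. Since `2 (x y' - x' y) = v u' - u v'`, four times the area is `∫ v du - ∫ u dv`,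
a difference of two numbers in `[0, (a + b) (a - b)]`.

Conversely, for `t ↦ (a t, y t)` with `y` `a`-Lipschitz, integration by parts gives the area
`a (b - 2 ∫ y) / 2`. The two broken null geodesics from the origin to `(a, b)` maximise and minimise
`∫ y`, with areas `∓ (a² - b²) / 4`, and their convex combinations give every area in between.
-/

open MeasureTheory Set

/-- A curve in the Minkowski plane is future-directed causal if, for almost every
`t ∈ [0,1]`, its first derivative dominates the absolute value of its second
derivative and is positive. -/
def IsFDCausal (γ : ℝ → ℝ × ℝ) : Prop :=
  ∀ᵐ t ∂(volume.restrict (Icc (0:ℝ) 1)),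
    |deriv (fun s => (γ s).2) t| ≤ deriv (fun s => (γ s).1) t ∧
      0 < deriv (fun s => (γ s).1) t

/-- `γ` is Lipschitz on `[0,1]`. -/
def IsLipCurve (γ : ℝ → ℝ × ℝ) : Prop :=
  ∃ K, LipschitzOnWith K γ (Icc (0:ℝ) 1)

/-- The signed area enclosed by `γ` and the segment joining its endpoints. -/
noncomputable def signedArea (γ : ℝ → ℝ × ℝ) : ℝ :=
  (1/2) * ∫ t in (0:ℝ)..1,
    ((γ t).1 * deriv (fun s => (γ s).2) t - deriv (fun s => (γ s).1) t * (γ t).2)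

open Filter

namespace intervalIntegral

theorem integral_pos_of_ae_restrict {f : ℝ → ℝ} {a b : ℝ} (hab : a < b)
    (hfi : IntervalIntegrable f volume a b) (hf : ∀ᵐ t ∂volume.restrict (Icc a b), 0 < f t) :
    0 < ∫ t in a..b, f t := by
  have hf' : ∀ᵐ t ∂volume.restrict (Ioc a b), 0 < f t :=
    ae_restrict_of_ae_restrict_of_subset Ioc_subset_Icc_self hf
  have hsupp : volume (Function.support f ∩ Ioc a b) ≠ 0 := by
    have : NeBot (ae (volume.restrict (Ioc a b))) := ae_neBot.2 (by simp [hab])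
    rw [← Measure.restrict_apply' measurableSet_Ioc, ← frequently_ae_mem_iff]
    exact (hf'.mono fun t ht => ht.ne').frequently
  rw [integral_pos_iff_support_of_nonneg_ae' _ hfi]
  · exact ⟨hab, pos_iff_ne_zero.2 hsupp⟩
  · rw [uIoc_of_le hab.le]
    exact hf'.mono fun t ht => ht.le

theorem integral_mul_mem_Icc {f φ : ℝ → ℝ} {a b M : ℝ} (hab : a ≤ b)
    (hf : ContinuousOn f (Icc a b)) (hφ : IntervalIntegrable φ volume a b)
    (hfM : ∀ t ∈ Icc a b, f t ∈ Icc 0 M) (hφ0 : ∀ᵐ t ∂volume.restrict (Icc a b), 0 ≤ φ t) :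
    ∫ t in a..b, f t * φ t ∈ Icc 0 (M * ∫ t in a..b, φ t) := by
  have hfφ : IntervalIntegrable (fun t => f t * φ t) volume a b :=
    hφ.continuousOn_mul (by rwa [uIcc_of_le hab])
  have hmem : ∀ᵐ t ∂volume.restrict (Icc a b), t ∈ Icc a b := ae_restrict_mem measurableSet_Icc
  refine ⟨integral_nonneg_of_ae_restrict hab ?_, ?_⟩
  · filter_upwards [hφ0, hmem] with t hφt ht using mul_nonneg (hfM t ht).1 hφt
  · rw [← integral_const_mul]
    refine integral_mono_ae_restrict hab hfφ (hφ.const_mul M) ?_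
    filter_upwards [hφ0, hmem] with t hφt ht using mul_le_mul_of_nonneg_right (hfM t ht).2 hφt

end intervalIntegral

namespace AbsolutelyContinuousOnInterval

variable {f g : ℝ → ℝ} {a b : ℝ}

theorem abs_sub_le_sub_of_abs_deriv_le (hf : AbsolutelyContinuousOnInterval f a b)
    (hg : AbsolutelyContinuousOnInterval g a b)
    (hgf : ∀ᵐ t ∂volume.restrict (Icc a b), |deriv g t| ≤ deriv f t)
    {s t : ℝ} (hs : s ∈ Icc a b) (ht : t ∈ Icc a b) (hst : s ≤ t) :
    |g t - g s| ≤ f t - f s := by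
  have hsub : uIcc s t ⊆ uIcc a b := uIcc_subset_uIcc (Icc_subset_uIcc hs) (Icc_subset_uIcc ht)
  have hf' := hf.mono hsub
  have hg' := hg.mono hsub
  rw [← hf'.integral_deriv_eq_sub, ← hg'.integral_deriv_eq_sub]
  calc |∫ u in s..t, deriv g u|
      _ ≤ ∫ u in s..t, |deriv g u| := intervalIntegral.abs_integral_le_integral_abs hst
      _ ≤ ∫ u in s..t, deriv f u :=
        intervalIntegral.integral_mono_ae_restrict hst hg'.intervalIntegrable_deriv.abs
          hf'.intervalIntegrable_deriv
          (ae_restrict_of_ae_restrict_of_subset (Icc_subset_Icc hs.1 ht.2) hgf)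

theorem two_mul_integral_mul_deriv_sub_deriv_mul (hf : AbsolutelyContinuousOnInterval f a b)
    (hg : AbsolutelyContinuousOnInterval g a b) :
    2 * ∫ t in a..b, (f t * deriv g t - deriv f t * g t) =
      (∫ t in a..b, (f t - g t) * (deriv f t + deriv g t)) -
        ∫ t in a..b, (f t + g t) * (deriv f t - deriv g t) := by
  rw [← intervalIntegral.integral_const_mul, ← intervalIntegral.integral_sub]
  · exact intervalIntegral.integral_congr fun t _ => by ring
  · exact (hf.intervalIntegrable_deriv.add hg.intervalIntegrable_deriv).continuousOn_mul
      (hf.continuousOn.sub hg.continuousOn)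
  · exact (hf.intervalIntegrable_deriv.sub hg.intervalIntegrable_deriv).continuousOn_mul
      (hf.continuousOn.add hg.continuousOn)

theorem two_mul_abs_integral_mul_deriv_sub_deriv_mul_le
    (hf : AbsolutelyContinuousOnInterval f a b) (hg : AbsolutelyContinuousOnInterval g a b)
    (hab : a ≤ b) (hgf : ∀ᵐ t ∂volume.restrict (Icc a b), |deriv g t| ≤ deriv f t)
    (hfa : f a = 0) (hga : g a = 0) :
    2 * |∫ t in a..b, (f t * deriv g t - deriv f t * g t)| ≤ f b ^ 2 - g b ^ 2 := by
  have hnull : ∀ t ∈ Icc a b, f t + g t ∈ Icc 0 (f b + g b) ∧ f t - g t ∈ Icc 0 (f b - g b) := by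
    intro t ht
    have h₁ := abs_le.1 (hf.abs_sub_le_sub_of_abs_deriv_le hg hgf (left_mem_Icc.2 hab) ht ht.1)
    have h₂ := abs_le.1 (hf.abs_sub_le_sub_of_abs_deriv_le hg hgf ht (right_mem_Icc.2 hab) ht.2)
    refine ⟨⟨?_, ?_⟩, ?_, ?_⟩ <;> linarith
  have hf' := hf.intervalIntegrable_deriv
  have hg' := hg.intervalIntegrable_deriv
  have hcont : ContinuousOn f (Icc a b) := uIcc_of_le hab ▸ hf.continuousOn
  have hcont' : ContinuousOn g (Icc a b) := uIcc_of_le hab ▸ hg.continuousOn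
  obtain ⟨hI₁, hI₁'⟩ := intervalIntegral.integral_mul_mem_Icc (f := fun t => f t - g t) hab
    (hcont.sub hcont') (hf'.add hg') (fun t ht => (hnull t ht).2)
    (hgf.mono fun t ht => by linarith [neg_abs_le (deriv g t)])
  obtain ⟨hI₂, hI₂'⟩ := intervalIntegral.integral_mul_mem_Icc (f := fun t => f t + g t) hab
    (hcont.add hcont') (hf'.sub hg') (fun t ht => (hnull t ht).1)
    (hgf.mono fun t ht => by linarith [le_abs_self (deriv g t)])
  rw [intervalIntegral.integral_add hf' hg', hf.integral_deriv_eq_sub, hg.integral_deriv_eq_sub,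
    hfa, hga] at hI₁'
  rw [intervalIntegral.integral_sub hf' hg', hf.integral_deriv_eq_sub, hg.integral_deriv_eq_sub,
    hfa, hga] at hI₂'
  rw [← abs_two, ← abs_mul, abs_le, hf.two_mul_integral_mul_deriv_sub_deriv_mul hg]
  constructor <;> linarith

end AbsolutelyContinuousOnInterval

section CausalCurve

variable {γ : ℝ → ℝ × ℝ}

theorem IsLipCurve.absolutelyContinuousOnInterval_fst (hγ : IsLipCurve γ) :
    AbsolutelyContinuousOnInterval (fun s => (γ s).1) 0 1 := by
  obtain ⟨K, hK⟩ := hγ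
  rw [← uIcc_of_le zero_le_one] at hK
  exact (LipschitzWith.prod_fst.comp_lipschitzOnWith hK).absolutelyContinuousOnInterval

theorem IsLipCurve.absolutelyContinuousOnInterval_snd (hγ : IsLipCurve γ) :
    AbsolutelyContinuousOnInterval (fun s => (γ s).2) 0 1 := by
  obtain ⟨K, hK⟩ := hγ
  rw [← uIcc_of_le zero_le_one] at hK
  exact (LipschitzWith.prod_snd.comp_lipschitzOnWith hK).absolutelyContinuousOnInterval

theorem IsFDCausal.fst_lt_fst (hc : IsFDCausal γ) (hγ : IsLipCurve γ) : (γ 0).1 < (γ 1).1 := by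
  have hX := hγ.absolutelyContinuousOnInterval_fst
  have := intervalIntegral.integral_pos_of_ae_restrict zero_lt_one hX.intervalIntegrable_deriv
    (hc.mono fun t ht => ht.2)
  rwa [hX.integral_deriv_eq_sub, sub_pos] at this

theorem IsFDCausal.four_mul_abs_signedArea_le (hc : IsFDCausal γ) (hγ : IsLipCurve γ)
    (h0 : γ 0 = (0, 0)) : 4 * |signedArea γ| ≤ (γ 1).1 ^ 2 - (γ 1).2 ^ 2 := by
  have := hγ.absolutelyContinuousOnInterval_fst.two_mul_abs_integral_mul_deriv_sub_deriv_mul_le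
    hγ.absolutelyContinuousOnInterval_snd zero_le_one (hc.mono fun t ht => ht.1)
    (by simp [h0]) (by simp [h0])
  rw [signedArea, abs_mul, abs_of_pos one_half_pos]
  linarith

end CausalCurve

theorem LipschitzWith.convex_comb {α : Type*} [PseudoMetricSpace α] {K : NNReal} {f g : α → ℝ}
    (hf : LipschitzWith K f) (hg : LipschitzWith K g) {θ : ℝ} (hθ : θ ∈ Icc 0 1) :
    LipschitzWith K (fun x => (1 - θ) * f x + θ * g x) :=
  LipschitzWith.of_dist_le_mul fun x y => by
    have hf' := hf.dist_le_mul x y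
    have hg' := hg.dist_le_mul x y
    rw [Real.dist_eq] at hf' hg' ⊢
    calc |(1 - θ) * f x + θ * g x - ((1 - θ) * f y + θ * g y)|
        = |(1 - θ) * (f x - f y) + θ * (g x - g y)| := by ring_nf
      _ ≤ (1 - θ) * |f x - f y| + θ * |g x - g y| := by
        refine (abs_add_le _ _).trans_eq ?_
        rw [abs_mul, abs_mul, abs_of_nonneg (sub_nonneg.2 hθ.2), abs_of_nonneg hθ.1]
      _ ≤ (1 - θ) * (K * dist x y) + θ * (K * dist x y) := by
        gcongr
        · exact sub_nonneg.2 hθ.2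
        · exact hθ.1
      _ = K * dist x y := by ring

/-- The highest `a`-Lipschitz path from `0` to `b` over `[0, 1]`: the future light ray from the
origin followed by the past light ray from `(1, b)`. The lowest one is `-causalRoof a (-b)`. -/
def causalRoof (a b t : ℝ) : ℝ := min (a * t) (b + a * (1 - t))

section CausalRoof

variable {a b : ℝ}

theorem lipschitzWith_causalRoof (ha : 0 ≤ a) (b : ℝ) : LipschitzWith ⟨a, ha⟩ (causalRoof a b) :=
  LipschitzWith.of_dist_le_mul fun x y => by
    simp only [causalRoof, Real.dist_eq]
    refine (abs_min_sub_min_le_max _ _ _ _).trans (max_le (le_of_eq ?_) (le_of_eq ?_))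
    · rw [← mul_sub, abs_mul, abs_of_nonneg ha]; rfl
    · rw [show b + a * (1 - x) - (b + a * (1 - y)) = a * (y - x) by ring, abs_mul,
        abs_of_nonneg ha, abs_sub_comm]; rfl

theorem causalRoof_zero (h : -a ≤ b) : causalRoof a b 0 = 0 := by
  simp only [causalRoof, mul_zero, sub_zero, mul_one, inf_eq_left]
  linarith

theorem causalRoof_one (h : b ≤ a) : causalRoof a b 1 = b := by
  simp [causalRoof, h]

theorem integral_causalRoof (ha : 0 < a) (hb : |b| ≤ a) :
    ∫ t in (0:ℝ)..1, causalRoof a b t = b / 2 + (a ^ 2 - b ^ 2) / (4 * a) := by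
  obtain ⟨hb₁, hb₂⟩ := abs_le.1 hb
  set s := (a + b) / (2 * a)
  have hs₀ : 0 ≤ s := div_nonneg (by linarith) (by positivity)
  have hs₁ : s ≤ 1 := by rw [div_le_one (by positivity)]; linarith
  have hcont : Continuous (causalRoof a b) := (lipschitzWith_causalRoof ha.le b).continuous
  rw [← intervalIntegral.integral_add_adjacent_intervals (b := s) (hcont.intervalIntegrable _ _)
    (hcont.intervalIntegrable _ _)]
  have h₁ : ∫ t in (0:ℝ)..s, causalRoof a b t = ∫ t in (0:ℝ)..s, a * t := by
    refine intervalIntegral.integral_congr fun t ht => min_eq_left ?_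
    rw [uIcc_of_le hs₀] at ht
    have : 2 * a * t ≤ a + b := by rw [← le_div_iff₀' (by positivity)]; exact ht.2
    linarith
  have h₂ : ∫ t in s..1, causalRoof a b t = ∫ t in s..1, b + a * (1 - t) := by
    refine intervalIntegral.integral_congr fun t ht => min_eq_right ?_
    rw [uIcc_of_le hs₁] at ht
    have : a + b ≤ 2 * a * t := by rw [← div_le_iff₀' (by positivity)]; exact ht.1
    linarith
  rw [h₁, h₂, intervalIntegral.integral_const_mul, integral_id, intervalIntegral.integral_add,
    intervalIntegral.integral_const_mul, intervalIntegral.integral_sub, integral_id]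
  · simp only [intervalIntegral.integral_const, smul_eq_mul, s]
    field_simp
    ring
  all_goals exact Continuous.intervalIntegrable (by fun_prop) _ _

end CausalRoof

section Graph

variable {a : ℝ} {Y : ℝ → ℝ}

theorem isLipCurve_graph {K : NNReal} (hY : LipschitzWith K Y) :
    IsLipCurve (fun t => (a * t, Y t)) :=
  ⟨_, ((lipschitzWith_smul a).prodMk hY).lipschitzOnWith⟩

theorem isFDCausal_graph (ha : 0 < a) (hY : LipschitzWith ⟨a, ha.le⟩ Y) :
    IsFDCausal (fun t => (a * t, Y t)) :=
  ae_of_all _ fun t => by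
    show |deriv Y t| ≤ deriv (fun s => a * s) t ∧ 0 < deriv (fun s => a * s) t
    rw [deriv_const_mul_id, ← Real.norm_eq_abs]
    exact ⟨norm_deriv_le_of_lipschitz hY, ha⟩

theorem signedArea_graph (hY : AbsolutelyContinuousOnInterval Y 0 1) :
    signedArea (fun t => (a * t, Y t)) = a / 2 * (Y 1 - 2 * ∫ t in (0:ℝ)..1, Y t) := by
  have hid : AbsolutelyContinuousOnInterval (fun t : ℝ => t) 0 1 :=
    LipschitzWith.id.lipschitzOnWith.absolutelyContinuousOnInterval
  have hparts := hid.integral_mul_deriv_eq_deriv_mul hY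
  simp only [deriv_id'', one_mul, zero_mul, sub_zero] at hparts
  show 1 / 2 * ∫ t in (0:ℝ)..1, (a * t * deriv Y t - deriv (fun s => a * s) t * Y t) = _
  simp only [deriv_const_mul_id, mul_assoc]
  rw [intervalIntegral.integral_sub, intervalIntegral.integral_const_mul,
    intervalIntegral.integral_const_mul, hparts]
  · ring
  · exact (hY.intervalIntegrable_deriv.continuousOn_mul continuousOn_id).const_mul a
  · exact (hY.continuousOn.intervalIntegrable).const_mul a

end Graph

theorem exists_causal_curve_signedArea_eq {a b : ℝ} (ha : 0 < a) (hb : |b| ≤ a) {θ : ℝ}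
    (hθ : θ ∈ Icc 0 1) :
    ∃ γ : ℝ → ℝ × ℝ, IsLipCurve γ ∧ IsFDCausal γ ∧ γ 0 = (0, 0) ∧ γ 1 = (a, b) ∧
      signedArea γ = (1 - 2 * θ) * (a ^ 2 - b ^ 2) / 4 := by
  obtain ⟨hb₁, hb₂⟩ := abs_le.1 hb
  have hfloor : LipschitzWith ⟨a, ha.le⟩ (fun t => -causalRoof a (-b) t) :=
    LipschitzWith.of_dist_le_mul fun x y => by
      rw [dist_neg_neg]; exact (lipschitzWith_causalRoof ha.le (-b)).dist_le_mul x y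
  set Y := fun t => (1 - θ) * -causalRoof a (-b) t + θ * causalRoof a b t
  have hY : LipschitzWith ⟨a, ha.le⟩ Y :=
    hfloor.convex_comb (lipschitzWith_causalRoof ha.le b) hθ
  have hcont : Continuous (causalRoof a b) := (lipschitzWith_causalRoof ha.le b).continuous
  have hcont' : Continuous (causalRoof a (-b)) := (lipschitzWith_causalRoof ha.le (-b)).continuous
  have hintY : ∫ t in (0:ℝ)..1, Y t = b / 2 + (2 * θ - 1) * (a ^ 2 - b ^ 2) / (4 * a) := by
    rw [intervalIntegral.integral_add, intervalIntegral.integral_const_mul,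
      intervalIntegral.integral_const_mul, intervalIntegral.integral_neg, integral_causalRoof ha hb,
      integral_causalRoof ha (by rwa [abs_neg])]
    · ring
    · exact (hcont'.intervalIntegrable _ _).neg.const_mul _
    · exact (hcont.intervalIntegrable _ _).const_mul _
  have hY1 : Y 1 = b := by
    simp only [Y, causalRoof_one hb₂, causalRoof_one (neg_le.1 hb₁), mul_neg, neg_neg]
    ring
  refine ⟨fun t => (a * t, Y t), isLipCurve_graph hY, isFDCausal_graph ha hY, ?_, ?_, ?_⟩
  · simp [Y, causalRoof_zero hb₁, causalRoof_zero (neg_le_neg hb₂)]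
  · simp [hY1]
  · rw [signedArea_graph hY.lipschitzOnWith.absolutelyContinuousOnInterval, hintY, hY1]
    field_simp
    ring

/-- there exists a future-directed causal Lipschitz curve from the
origin to `(a,b)` enclosing signed area `c` iff `a > 0` and `-a² + b² + 4|c| ≤ 0`. -/
theorem exists_causal_curve_iff (a b c : ℝ) :
    (∃ γ : ℝ → ℝ × ℝ, IsLipCurve γ ∧ IsFDCausal γ ∧
      γ 0 = (0, 0) ∧ γ 1 = (a, b) ∧ signedArea γ = c) ↔
    (0 < a ∧ -a^2 + b^2 + 4 * |c| ≤ 0) := by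
  constructor
  · rintro ⟨γ, hγ, hc, h0, h1, rfl⟩
    have hpos := hc.fst_lt_fst hγ
    have harea := hc.four_mul_abs_signedArea_le hγ h0
    simp only [h0, h1] at hpos harea
    exact ⟨hpos, by linarith⟩
  · rintro ⟨ha, hc⟩
    have hb : |b| ≤ a := abs_le_of_sq_le_sq (by linarith [abs_nonneg c]) ha.le
    obtain ⟨θ, hθ, rfl⟩ : ∃ θ ∈ Icc (0:ℝ) 1, (1 - 2 * θ) * (a ^ 2 - b ^ 2) / 4 = c := by
      rcases (show 0 ≤ a ^ 2 - b ^ 2 by linarith [abs_nonneg c]).eq_or_lt with hD | hD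
      · exact ⟨1 / 2, by norm_num, by simp [abs_nonpos_iff.1 (by linarith : |c| ≤ 0)]⟩
      refine ⟨1 / 2 - 2 * c / (a ^ 2 - b ^ 2), ⟨?_, ?_⟩, by field_simp; ring⟩
      · have : 2 * c / (a ^ 2 - b ^ 2) ≤ 1 / 2 := by
          rw [div_le_iff₀ hD]; linarith [le_abs_self c]
        linarith
      · have : -(1 / 2) ≤ 2 * c / (a ^ 2 - b ^ 2) := by
          rw [le_div_iff₀ hD]; linarith [neg_abs_le c]
        linarith
    exact exists_causal_curve_signedArea_eq ha hb hθ
end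

section
/- Let a, b ∈ ℝ with a > |b|, set T = √(a² − b²), and let R : ℝ² → ℝ² be the linear map with matrix (1/T)·[[a, −b], [−b, a]]. If γ : [0,1] → ℝ² is a future-directed causal Lipschitz curve with γ(0) = (0,0) and γ(1) = (a,b), then R∘γ is a future-directed causal Lipschitz curve from (0,0) to (T,0) with L(R∘γ) = L(γ) and A(R∘γ) = A(γ), and there exists a Lipschitz function f : [0,T] → ℝ with Lipschitz constant at most 1 and f(0) = f(T) = 0 such that the image of R∘γ equals the graph {(s, f(s)) : s ∈ [0,T]}. -/
/-!
In the light-cone coordinates `u = x + y`, `v = x - y` the boost is the diagonal map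
`(u, v) ↦ ((a - b)/T · u, (a + b)/T · v)` of determinant `1`. It therefore preserves the
Minkowski form `uv = x² - y²`, the area form and the future cone `{u ≥ 0, v ≥ 0}`, and, being
linear, it commutes with differentiation, which for Lipschitz curves happens almost everywhere.
By the fundamental theorem of calculus for absolutely continuous functions, a causal Lipschitz
curve has monotone light-cone coordinates, i.e. `|Δy| ≤ Δx` along it. Hence the second
coordinate of the boosted curve is a `1`-Lipschitz function of the first, which sweeps out
`[0, T]` by the intermediate value theorem.
-/

open MeasureTheory Set

/-- The Lorentzian length of a curve in the Minkowski plane. -/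
noncomputable def lorLength (γ : ℝ → ℝ × ℝ) : ℝ :=
  ∫ t in (0:ℝ)..1,
    Real.sqrt ((deriv (fun s => (γ s).1) t)^2 - (deriv (fun s => (γ s).2) t)^2)

/-- The Lorentz boost sending `(a,b)` to `(√(a²-b²), 0)`, given by the matrix
`(1/T)·[[a, −b], [−b, a]]` with `T = √(a²-b²)`. -/
noncomputable def lorentzBoost (a b : ℝ) (p : ℝ × ℝ) : ℝ × ℝ :=
  ((a / Real.sqrt (a^2 - b^2)) * p.1 - (b / Real.sqrt (a^2 - b^2)) * p.2,
   -(b / Real.sqrt (a^2 - b^2)) * p.1 + (a / Real.sqrt (a^2 - b^2)) * p.2)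

/-- Taken coordinatewise, as in the definitions above: unlike `deriv γ t`, it does not vanish
when only one coordinate is differentiable at `t`. -/
noncomputable def velocity (γ : ℝ → ℝ × ℝ) (t : ℝ) : ℝ × ℝ :=
  (deriv (fun s => (γ s).1) t, deriv (fun s => (γ s).2) t)

def IsFutureCausal (v : ℝ × ℝ) : Prop :=
  |v.2| ≤ v.1 ∧ 0 < v.1

def CausalLE (p q : ℝ × ℝ) : Prop :=
  |q.2 - p.2| ≤ q.1 - p.1

def minkowskiSq (v : ℝ × ℝ) : ℝ :=
  v.1 ^ 2 - v.2 ^ 2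

def areaForm (p v : ℝ × ℝ) : ℝ :=
  p.1 * v.2 - v.1 * p.2

theorem isFDCausal_iff {γ : ℝ → ℝ × ℝ} :
    IsFDCausal γ ↔ ∀ᵐ t ∂(volume.restrict (Icc (0:ℝ) 1)), IsFutureCausal (velocity γ t) :=
  Iff.rfl

theorem lorLength_eq_integral (γ : ℝ → ℝ × ℝ) :
    lorLength γ = ∫ t in (0:ℝ)..1, √(minkowskiSq (velocity γ t)) :=
  rfl

theorem signedArea_eq_integral (γ : ℝ → ℝ × ℝ) :
    signedArea γ = (1/2) * ∫ t in (0:ℝ)..1, areaForm (γ t) (velocity γ t) :=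
  rfl

theorem intervalIntegral_congr_of_ae_restrict_Icc {f g : ℝ → ℝ} {p q : ℝ} (hpq : p ≤ q)
    (h : ∀ᵐ t ∂(volume.restrict (Icc p q)), f t = g t) :
    ∫ t in p..q, f t = ∫ t in p..q, g t := by
  rw [intervalIntegral.integral_of_le hpq, intervalIntegral.integral_of_le hpq]
  exact integral_congr_ae (ae_restrict_of_ae_restrict_of_subset Ioc_subset_Icc_self h)

theorem AbsolutelyContinuousOnInterval.monotoneOn_of_ae_deriv_nonneg {f : ℝ → ℝ} {p q : ℝ}
    (hf : AbsolutelyContinuousOnInterval f p q)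
    (hf' : ∀ᵐ t ∂(volume.restrict (Icc p q)), 0 ≤ deriv f t) :
    MonotoneOn f (Icc p q) := by
  intro x hx y hy hxy
  have hsub : Icc x y ⊆ Icc p q := Icc_subset_Icc hx.1 hy.2
  have hpq : p ≤ q := hx.1.trans hx.2
  have hFTC := (hf.mono (by rwa [uIcc_of_le hxy, uIcc_of_le hpq])).integral_deriv_eq_sub
  have := intervalIntegral.integral_nonneg_of_ae_restrict hxy
    (ae_restrict_of_ae_restrict_of_subset hsub hf')
  linarith

section LorentzBoost

variable {a b : ℝ}

theorem sqrt_sq_sub_sq_pos (hab : |b| < a) : 0 < √(a ^ 2 - b ^ 2) :=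
  Real.sqrt_pos.2 (by nlinarith [sq_abs b, abs_nonneg b])

theorem sq_sqrt_sq_sub_sq (hab : |b| < a) : √(a ^ 2 - b ^ 2) ^ 2 = a ^ 2 - b ^ 2 :=
  Real.sq_sqrt (by nlinarith [sq_abs b, abs_nonneg b])

theorem lorentzBoost_zero : lorentzBoost a b (0, 0) = (0, 0) := by
  simp [lorentzBoost]

theorem lorentzBoost_self (hab : |b| < a) : lorentzBoost a b (a, b) = (√(a ^ 2 - b ^ 2), 0) := by
  have hT := sqrt_sq_sub_sq_pos hab
  have hT2 := sq_sqrt_sq_sub_sq hab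
  simp only [lorentzBoost, Prod.mk.injEq]
  constructor
  · field_simp
    exact hT2.symm
  · ring

theorem minkowskiSq_lorentzBoost (hab : |b| < a) (v : ℝ × ℝ) :
    minkowskiSq (lorentzBoost a b v) = minkowskiSq v := by
  have hT := sqrt_sq_sub_sq_pos hab
  have hT2 := sq_sqrt_sq_sub_sq hab
  simp only [minkowskiSq, lorentzBoost]
  field_simp
  rw [hT2]
  ring

theorem areaForm_lorentzBoost (hab : |b| < a) (p v : ℝ × ℝ) :
    areaForm (lorentzBoost a b p) (lorentzBoost a b v) = areaForm p v := by
  have hT := sqrt_sq_sub_sq_pos hab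
  have hT2 := sq_sqrt_sq_sub_sq hab
  simp only [areaForm, lorentzBoost]
  field_simp
  rw [hT2]
  ring

theorem lorentzBoost_fst_add_snd (p : ℝ × ℝ) :
    (lorentzBoost a b p).1 + (lorentzBoost a b p).2 =
      (a - b) / √(a ^ 2 - b ^ 2) * (p.1 + p.2) := by
  simp only [lorentzBoost]
  ring

theorem lorentzBoost_fst_sub_snd (p : ℝ × ℝ) :
    (lorentzBoost a b p).1 - (lorentzBoost a b p).2 =
      (a + b) / √(a ^ 2 - b ^ 2) * (p.1 - p.2) := by
  simp only [lorentzBoost]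
  ring

theorem isFutureCausal_lorentzBoost (hab : |b| < a) {v : ℝ × ℝ} (hv : IsFutureCausal v) :
    IsFutureCausal (lorentzBoost a b v) := by
  have hT := sqrt_sq_sub_sq_pos hab
  obtain ⟨hb₁, hb₂⟩ := abs_lt.1 hab
  obtain ⟨hv₁, hv₂⟩ := abs_le.1 hv.1
  have hplus : 0 ≤ (lorentzBoost a b v).1 + (lorentzBoost a b v).2 := by
    rw [lorentzBoost_fst_add_snd]
    exact mul_nonneg (div_nonneg (by linarith) hT.le) (by linarith)
  have hminus : 0 ≤ (lorentzBoost a b v).1 - (lorentzBoost a b v).2 := by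
    rw [lorentzBoost_fst_sub_snd]
    exact mul_nonneg (div_nonneg (by linarith) hT.le) (by linarith)
  have hfst : (lorentzBoost a b v).1 = (a * v.1 - b * v.2) / √(a ^ 2 - b ^ 2) := by
    simp only [lorentzBoost]
    ring
  have hbv : b * v.2 ≤ |b| * v.1 := by
    calc b * v.2 ≤ |b| * |v.2| := by rw [← abs_mul]; exact le_abs_self _
      _ ≤ |b| * v.1 := mul_le_mul_of_nonneg_left hv.1 (abs_nonneg b)
  refine ⟨abs_le.2 ⟨by linarith, by linarith⟩, ?_⟩
  rw [hfst]
  exact div_pos (by nlinarith [mul_lt_mul_of_pos_right hab hv.2]) hT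

noncomputable def lorentzBoostLinear (a b : ℝ) : ℝ × ℝ →ₗ[ℝ] ℝ × ℝ where
  toFun := lorentzBoost a b
  map_add' p q := by
    simp only [lorentzBoost, Prod.fst_add, Prod.snd_add, Prod.mk_add_mk]
    congr 1 <;> ring
  map_smul' r p := by
    simp only [lorentzBoost, Prod.smul_fst, Prod.smul_snd, Prod.smul_mk, smul_eq_mul,
      RingHom.id_apply]
    congr 1 <;> ring

end LorentzBoost

section Curves

variable {a b : ℝ} {γ : ℝ → ℝ × ℝ}

theorem IsLipCurve.lorentzBoost_comp (hγ : IsLipCurve γ) :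
    IsLipCurve (fun t => lorentzBoost a b (γ t)) :=
  let ⟨_, hK⟩ := hγ
  ⟨_, (lorentzBoostLinear a b).toContinuousLinearMap.lipschitz.comp_lipschitzOnWith hK⟩

theorem velocity_lorentzBoost_comp {t : ℝ} (h₁ : DifferentiableAt ℝ (fun s => (γ s).1) t)
    (h₂ : DifferentiableAt ℝ (fun s => (γ s).2) t) :
    velocity (fun s => lorentzBoost a b (γ s)) t = lorentzBoost a b (velocity γ t) := by
  have h₁ := h₁.hasDerivAt
  have h₂ := h₂.hasDerivAt
  ext
  · exact ((h₁.const_mul _).sub (h₂.const_mul _)).deriv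
  · exact ((h₁.const_mul _).add (h₂.const_mul _)).deriv

theorem IsLipCurve.continuousOn (hγ : IsLipCurve γ) : ContinuousOn γ (Icc 0 1) :=
  let ⟨_, hK⟩ := hγ
  hK.continuousOn

theorem IsLipCurve.absolutelyContinuousOnInterval (hγ : IsLipCurve γ) :
    AbsolutelyContinuousOnInterval (fun s => (γ s).1) 0 1 ∧
      AbsolutelyContinuousOnInterval (fun s => (γ s).2) 0 1 := by
  obtain ⟨K, hK⟩ := hγ
  rw [← uIcc_of_le zero_le_one] at hK
  exact ⟨(LipschitzWith.prod_fst.comp_lipschitzOnWith hK).absolutelyContinuousOnInterval,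
    (LipschitzWith.prod_snd.comp_lipschitzOnWith hK).absolutelyContinuousOnInterval⟩

theorem IsLipCurve.ae_differentiableAt (hγ : IsLipCurve γ) :
    ∀ᵐ t ∂(volume.restrict (Icc (0:ℝ) 1)),
      DifferentiableAt ℝ (fun s => (γ s).1) t ∧ DifferentiableAt ℝ (fun s => (γ s).2) t := by
  obtain ⟨hac₁, hac₂⟩ := hγ.absolutelyContinuousOnInterval
  rw [← uIcc_of_le zero_le_one, ae_restrict_iff' measurableSet_uIcc]
  filter_upwards [hac₁.ae_differentiableAt, hac₂.ae_differentiableAt] with t h₁ h₂ ht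
  exact ⟨h₁ ht, h₂ ht⟩

theorem IsLipCurve.ae_velocity_lorentzBoost_comp (hγ : IsLipCurve γ) :
    ∀ᵐ t ∂(volume.restrict (Icc (0:ℝ) 1)),
      velocity (fun s => lorentzBoost a b (γ s)) t = lorentzBoost a b (velocity γ t) := by
  filter_upwards [hγ.ae_differentiableAt] with t ⟨h₁, h₂⟩
  exact velocity_lorentzBoost_comp h₁ h₂

theorem IsFDCausal.lorentzBoost_comp (hab : |b| < a) (hγ : IsLipCurve γ) (hC : IsFDCausal γ) :
    IsFDCausal (fun t => lorentzBoost a b (γ t)) := by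
  rw [isFDCausal_iff] at hC ⊢
  filter_upwards [hγ.ae_velocity_lorentzBoost_comp, hC] with t hv hcausal
  rw [hv]
  exact isFutureCausal_lorentzBoost hab hcausal

theorem lorLength_lorentzBoost_comp (hab : |b| < a) (hγ : IsLipCurve γ) :
    lorLength (fun t => lorentzBoost a b (γ t)) = lorLength γ := by
  rw [lorLength_eq_integral, lorLength_eq_integral]
  refine intervalIntegral_congr_of_ae_restrict_Icc zero_le_one ?_
  filter_upwards [hγ.ae_velocity_lorentzBoost_comp] with t hv
  rw [hv, minkowskiSq_lorentzBoost hab]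

theorem signedArea_lorentzBoost_comp (hab : |b| < a) (hγ : IsLipCurve γ) :
    signedArea (fun t => lorentzBoost a b (γ t)) = signedArea γ := by
  rw [signedArea_eq_integral, signedArea_eq_integral]
  congr 1
  refine intervalIntegral_congr_of_ae_restrict_Icc zero_le_one ?_
  filter_upwards [hγ.ae_velocity_lorentzBoost_comp] with t hv
  rw [hv, areaForm_lorentzBoost hab]

theorem IsFDCausal.monotoneOn_fst_add_mul_snd (hγ : IsLipCurve γ) (hC : IsFDCausal γ) {σ : ℝ}
    (hσ : |σ| ≤ 1) : MonotoneOn (fun t => (γ t).1 + σ * (γ t).2) (Icc 0 1) := by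
  obtain ⟨hac₁, hac₂⟩ := hγ.absolutelyContinuousOnInterval
  refine (hac₁.fun_add (hac₂.const_mul σ)).monotoneOn_of_ae_deriv_nonneg ?_
  filter_upwards [hγ.ae_differentiableAt, hC] with t ⟨h₁, h₂⟩ hv
  rw [(h₁.hasDerivAt.fun_add (h₂.hasDerivAt.const_mul σ)).deriv]
  have hσv : |σ * deriv (fun s => (γ s).2) t| ≤ |deriv (fun s => (γ s).2) t| := by
    rw [abs_mul]
    exact mul_le_of_le_one_left (abs_nonneg _) hσ
  linarith [neg_abs_le (σ * deriv (fun s => (γ s).2) t), hv.1]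

theorem IsFDCausal.causalLE (hγ : IsLipCurve γ) (hC : IsFDCausal γ) {t₁ t₂ : ℝ}
    (h₁ : t₁ ∈ Icc (0:ℝ) 1) (h₂ : t₂ ∈ Icc (0:ℝ) 1) (h : t₁ ≤ t₂) : CausalLE (γ t₁) (γ t₂) := by
  have hplus := hC.monotoneOn_fst_add_mul_snd hγ (σ := 1) (by simp) h₁ h₂ h
  have hminus := hC.monotoneOn_fst_add_mul_snd hγ (σ := -1) (by simp) h₁ h₂ h
  dsimp only at hplus hminus
  exact abs_le.2 ⟨by linarith, by linarith⟩

end Curves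

theorem CausalLE.fst_le {p q : ℝ × ℝ} (h : CausalLE p q) : p.1 ≤ q.1 :=
  sub_nonneg.1 ((abs_nonneg _).trans h)

theorem CausalLE.dist_snd_le {p q : ℝ × ℝ} (h : CausalLE p q) : dist p.2 q.2 ≤ dist p.1 q.1 := by
  rw [Real.dist_eq, Real.dist_eq, abs_sub_comm, abs_sub_comm p.1]
  exact h.trans (le_abs_self _)

theorem exists_lipschitzOnWith_graph_eq_image {β : ℝ → ℝ × ℝ} {p q : ℝ} (hpq : p ≤ q)
    (hcont : ContinuousOn (fun t => (β t).1) (Icc p q))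
    (hβ : ∀ t₁ ∈ Icc p q, ∀ t₂ ∈ Icc p q, t₁ ≤ t₂ → CausalLE (β t₁) (β t₂)) :
    ∃ f : ℝ → ℝ, LipschitzOnWith 1 f (Icc (β p).1 (β q).1) ∧
      (∀ t ∈ Icc p q, f (β t).1 = (β t).2) ∧
      β '' Icc p q = (fun s => (s, f s)) '' Icc (β p).1 (β q).1 := by
  have hdist : ∀ t ∈ Icc p q, ∀ t' ∈ Icc p q, dist (β t).2 (β t').2 ≤ dist (β t).1 (β t').1 := by
    intro t ht t' ht'
    rcases le_total t t' with h | h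
    · exact (hβ t ht t' ht' h).dist_snd_le
    · rw [dist_comm, dist_comm (β t).1]
      exact (hβ t' ht' t ht h).dist_snd_le
  have hmaps : MapsTo (fun t => (β t).1) (Icc p q) (Icc (β p).1 (β q).1) := fun t ht =>
    ⟨(hβ p (left_mem_Icc.2 hpq) t ht ht.1).fst_le, (hβ t ht q (right_mem_Icc.2 hpq) ht.2).fst_le⟩
  have hsurj : SurjOn (fun t => (β t).1) (Icc p q) (Icc (β p).1 (β q).1) :=
    intermediate_value_Icc hpq hcont
  set g := Function.invFunOn (fun t => (β t).1) (Icc p q)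
  have hg_mem : ∀ s ∈ Icc (β p).1 (β q).1, g s ∈ Icc p q := fun s hs => hsurj.mapsTo_invFunOn hs
  have hg_fst : ∀ s ∈ Icc (β p).1 (β q).1, (β (g s)).1 = s := fun s hs =>
    hsurj.rightInvOn_invFunOn hs
  have hgraph : ∀ t ∈ Icc p q, (β (g (β t).1)).2 = (β t).2 := by
    intro t ht
    have := hdist _ (hg_mem _ (hmaps ht)) t ht
    rwa [hg_fst _ (hmaps ht), dist_self, dist_le_zero] at this
  refine ⟨fun s => (β (g s)).2, LipschitzOnWith.of_dist_le_mul fun s hs s' hs' => ?_, hgraph, ?_⟩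
  · simpa only [NNReal.coe_one, one_mul, hg_fst s hs, hg_fst s' hs'] using
      hdist _ (hg_mem s hs) _ (hg_mem s' hs')
  · apply Subset.antisymm
    · rintro _ ⟨t, ht, rfl⟩
      exact ⟨(β t).1, hmaps ht, Prod.ext rfl (hgraph t ht)⟩
    · rintro _ ⟨s, hs, rfl⟩
      exact ⟨g s, hg_mem s hs, Prod.ext (hg_fst s hs) rfl⟩

/-- a future-directed causal curve from the origin to `(a,b)`, with
`a > |b|`, can be rotated by the Lorentz boost `R` into a future-directed causal
curve from the origin to `(T,0)` with the same length and area, whose image is the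
graph of a `1`-Lipschitz function `f : [0,T] → ℝ` vanishing at the endpoints. -/
theorem causal_curve_graphical (a b : ℝ) (hab : |b| < a)
    (γ : ℝ → ℝ × ℝ) (hLip : IsLipCurve γ) (hCausal : IsFDCausal γ)
    (h0 : γ 0 = (0, 0)) (h1 : γ 1 = (a, b)) :
    IsLipCurve (fun t => lorentzBoost a b (γ t)) ∧
    IsFDCausal (fun t => lorentzBoost a b (γ t)) ∧
    (fun t => lorentzBoost a b (γ t)) 0 = (0, 0) ∧
    (fun t => lorentzBoost a b (γ t)) 1 = (Real.sqrt (a^2 - b^2), 0) ∧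
    lorLength (fun t => lorentzBoost a b (γ t)) = lorLength γ ∧
    signedArea (fun t => lorentzBoost a b (γ t)) = signedArea γ ∧
    ∃ f : ℝ → ℝ, LipschitzOnWith 1 f (Icc 0 (Real.sqrt (a^2 - b^2))) ∧
      f 0 = 0 ∧ f (Real.sqrt (a^2 - b^2)) = 0 ∧
      (fun t => lorentzBoost a b (γ t)) '' (Icc 0 1) =
        (fun s => (s, f s)) '' (Icc 0 (Real.sqrt (a^2 - b^2))) := by
  have hβLip : IsLipCurve (fun t => lorentzBoost a b (γ t)) := hLip.lorentzBoost_comp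
  have hβCausal := hCausal.lorentzBoost_comp hab hLip
  have hβ0 : lorentzBoost a b (γ 0) = (0, 0) := by rw [h0, lorentzBoost_zero]
  have hβ1 : lorentzBoost a b (γ 1) = (√(a ^ 2 - b ^ 2), 0) := by rw [h1, lorentzBoost_self hab]
  obtain ⟨f, hf, hgraph, himage⟩ := exists_lipschitzOnWith_graph_eq_image zero_le_one
    (continuous_fst.comp_continuousOn hβLip.continuousOn)
    (fun t₁ h₁ t₂ h₂ h => hβCausal.causalLE hβLip h₁ h₂ h)
  rw [hβ0, hβ1] at hf himage
  refine ⟨hβLip, hβCausal, hβ0, hβ1, lorLength_lorentzBoost_comp hab hLip,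
    signedArea_lorentzBoost_comp hab hLip, f, hf, ?_, ?_, himage⟩
  · simpa [hβ0] using hgraph 0 (left_mem_Icc.2 zero_le_one)
  · simpa [hβ1] using hgraph 1 (right_mem_Icc.2 zero_le_one)
end

section
/- Let T > 0 and c ∈ ℝ. There exists a Lipschitz function f : [0,T] → ℝ with Lipschitz constant at most 1, f(0) = f(T) = 0 and ∫₀^T f(t) dt = c if and only if 4|c| ≤ T². -/
open MeasureTheory Set

/-- `𝓕(T,c)`: the set of `1`-Lipschitz functions on `[0,T]` vanishing at the
endpoints and enclosing signed area `c`. -/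
def memF (T c : ℝ) (f : ℝ → ℝ) : Prop :=
  LipschitzOnWith 1 f (Icc (0:ℝ) T) ∧ f 0 = 0 ∧ f T = 0 ∧
    (∫ t in (0:ℝ)..T, f t) = c

lemma integral_min_eq (T : ℝ) (hT : 0 < T) :
    (∫ t in (0:ℝ)..T, min t (T - t)) = T^2 / 4 := by
  have hhalf : (0:ℝ) ≤ T / 2 := by linarith
  have hcont : Continuous fun t : ℝ => min t (T - t) :=
    continuous_id.min (continuous_const.sub continuous_id)
  have h1 : (∫ t in (0:ℝ)..(T/2), min t (T - t)) = ∫ t in (0:ℝ)..(T/2), t := by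
    apply intervalIntegral.integral_congr
    intro t ht
    rw [uIcc_of_le hhalf] at ht
    have := ht.1; have := ht.2
    simp only [min_eq_left (by linarith : t ≤ T - t)]
  have h2 : (∫ t in (T/2)..T, min t (T - t)) = ∫ t in (T/2)..T, (T - t) := by
    apply intervalIntegral.integral_congr
    intro t ht
    rw [uIcc_of_le (by linarith : T/2 ≤ T)] at ht
    have := ht.1; have := ht.2
    simp only [min_eq_right (by linarith : T - t ≤ t)]
  have hadd : (∫ t in (0:ℝ)..(T/2), min t (T - t)) + (∫ t in (T/2)..T, min t (T - t))
      = ∫ t in (0:ℝ)..T, min t (T - t) :=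
    intervalIntegral.integral_add_adjacent_intervals
      (hcont.intervalIntegrable _ _) (hcont.intervalIntegrable _ _)
  rw [← hadd, h1, h2]
  rw [intervalIntegral.integral_sub intervalIntegrable_const
    (continuous_id'.intervalIntegrable _ _)]
  simp [integral_id]
  ring

/-- `𝓕(T,c)` is nonempty if and only if `4|c| ≤ T²`. -/
theorem memF_nonempty_iff (T c : ℝ) (hT : 0 < T) :
    (∃ f : ℝ → ℝ, memF T c f) ↔ 4 * |c| ≤ T^2 := by
  constructor
  · rintro ⟨f, hlip, h0, hTv, hint⟩
    have hcont : ContinuousOn f (Icc 0 T) := hlip.continuousOn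
    have hfi : IntervalIntegrable f volume 0 T := by
      apply ContinuousOn.intervalIntegrable
      rwa [uIcc_of_le hT.le]
    have hbound : ∀ t ∈ Icc (0:ℝ) T, |f t| ≤ min t (T - t) := by
      intro t ht
      have h1 : |f t| ≤ t := by
        have := hlip.dist_le_mul t ht 0 (left_mem_Icc.mpr hT.le)
        simpa [h0, Real.dist_eq, abs_of_nonneg ht.1] using this
      have h2 : |f t| ≤ T - t := by
        have := hlip.dist_le_mul t ht T (right_mem_Icc.mpr hT.le)
        simpa [hTv, Real.dist_eq, abs_of_nonpos (by linarith [ht.2] : t - T ≤ 0)] using this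
      exact le_min h1 h2
    have hcont2 : Continuous fun t : ℝ => min t (T - t) :=
      continuous_id.min (continuous_const.sub continuous_id)
    have habs : |∫ t in (0:ℝ)..T, f t| ≤ ∫ t in (0:ℝ)..T, |f t| :=
      intervalIntegral.abs_integral_le_integral_abs hT.le
    have hmono : (∫ t in (0:ℝ)..T, |f t|) ≤ ∫ t in (0:ℝ)..T, min t (T - t) := by
      apply intervalIntegral.integral_mono_on hT.le hfi.abs
        (hcont2.intervalIntegrable _ _) hbound
    rw [hint] at habs
    have := integral_min_eq T hT
    linarith
  · intro hc
    set lam := 4 * c / T^2 with hlam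
    have hT2 : (0:ℝ) < T^2 := by positivity
    have hlam1 : |lam| ≤ 1 := by
      rw [hlam, abs_div]
      rw [div_le_one (by rwa [abs_of_pos hT2])]
      rw [abs_of_pos hT2]
      calc |4 * c| = 4 * |c| := by rw [abs_mul]; norm_num
        _ ≤ T^2 := hc
    refine ⟨fun t => lam * min t (T - t), ?_, ?_, ?_, ?_⟩
    · have hg : LipschitzWith 1 (fun t : ℝ => min t (T - t)) := by
        have h2 : LipschitzWith 1 (fun t : ℝ => T - t) := LipschitzWith.of_dist_le_mul fun x y => by
          rw [NNReal.coe_one, one_mul, Real.dist_eq, Real.dist_eq]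
          have h : T - x - (T - y) = -(x - y) := by ring
          rw [h, abs_neg]
        simpa using LipschitzWith.id.min h2
      rw [lipschitzOnWith_iff_dist_le_mul]
      intro x _ y _
      have hd := hg.dist_le_mul x y
      simp only [NNReal.coe_one, one_mul] at hd ⊢
      calc dist (lam * min x (T - x)) (lam * min y (T - y))
          = |lam| * dist (min x (T - x)) (min y (T - y)) := by
            rw [Real.dist_eq, Real.dist_eq, ← mul_sub, abs_mul]
        _ ≤ 1 * dist x y := by
            apply mul_le_mul hlam1 hd dist_nonneg zero_le_one
        _ = dist x y := one_mul _
    · simp [min_eq_left hT.le]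
    · simp [min_eq_right (by linarith : T - T ≤ T), hT.le]
    · rw [intervalIntegral.integral_const_mul, integral_min_eq T hT, hlam]
      field_simp
end

section
/- Let T > 0 and c ∈ ℝ with c ≠ 0 and 4|c| = T². Then the set 𝓕(T,c) has exactly one element, namely the function f(x) = sgn(c)·min(x, T − x). -/
open MeasureTheory Set

/-- A continuous nonnegative function on `[a,b]` with zero integral vanishes. -/
lemma aux_eq_zero_of_nonneg_of_integral_zero {a b : ℝ} (hab : a < b) {h : ℝ → ℝ}
    (hcont : ContinuousOn h (Icc a b)) (hnn : ∀ x ∈ Icc a b, 0 ≤ h x)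
    (hint : (∫ t in a..b, h t) = 0) : ∀ x ∈ Icc a b, h x = 0 := by
  have hii : IntervalIntegrable h volume a b := by
    apply ContinuousOn.intervalIntegrable
    rwa [uIcc_of_le hab.le]
  have hnnae : 0 ≤ᵐ[volume.restrict (Ioc a b)] h := by
    rw [Filter.EventuallyLE, ae_restrict_iff' measurableSet_Ioc]
    filter_upwards with x hx using hnn x (Ioc_subset_Icc_self hx)
  have hae : h =ᵐ[volume.restrict (Ioc a b)] 0 :=
    (intervalIntegral.integral_eq_zero_iff_of_le_of_nonneg_ae hab.le hnnae hii).mp hint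
  have hmeas : volume ({x | h x ≠ 0} ∩ Ioc a b) = 0 := by
    have h0 := ae_iff.mp hae
    simpa [Measure.restrict_apply' measurableSet_Ioc] using h0
  intro x hx
  by_contra hne
  have hpos : 0 < h x := lt_of_le_of_ne (hnn x hx) (Ne.symm hne)
  have hmem : {y | 0 < h y} ∈ nhdsWithin x (Icc a b) :=
    hcont x hx (Ioi_mem_nhds hpos)
  rcases Metric.mem_nhdsWithin_iff.mp hmem with ⟨δ, hδ, hball⟩
  set u := max a (x - δ) with hu
  set v := min b (x + δ) with hv
  have huv : u < v := by
    rw [hu, hv]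
    refine max_lt (lt_min hab ?_) (lt_min ?_ ?_)
    · linarith [hx.1]
    · linarith [hx.2]
    · linarith
  have hsub : Ioo u v ⊆ {y | h y ≠ 0} ∩ Ioc a b := by
    intro y hy
    have hy1 : a < y := lt_of_le_of_lt (le_max_left _ _) hy.1
    have hy2 : y < b := lt_of_lt_of_le hy.2 (min_le_left _ _)
    have hyd : dist y x < δ := by
      rw [Real.dist_eq, abs_lt]
      constructor
      · have := lt_of_le_of_lt (le_max_right a (x - δ)) hy.1
        linarith
      · have := lt_of_lt_of_le hy.2 (min_le_right b (x + δ))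
        linarith
    have : y ∈ {y | 0 < h y} := hball ⟨hyd, ⟨hy1.le, hy2.le⟩⟩
    exact ⟨ne_of_gt this, ⟨hy1, hy2.le⟩⟩
  have h0 : volume (Ioo u v) = 0 := measure_mono_null hsub hmeas
  rw [Real.volume_Ioo] at h0
  exact (ENNReal.ofReal_pos.mpr (sub_pos.mpr huv)).ne' h0

/-- The tent function is `1`-Lipschitz. -/
lemma aux_tent_lipschitz (T : ℝ) : LipschitzWith 1 fun x : ℝ => min x (T - x) := by
  have h := LipschitzWith.min (LipschitzWith.id (α := ℝ))
    ((LipschitzWith.const (α := ℝ) T).sub LipschitzWith.id)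
  simpa using h

/-- The integral of the tent function. -/
lemma aux_tent_integral (T : ℝ) (hT : 0 < T) :
    (∫ t in (0:ℝ)..T, min t (T - t)) = T^2/4 := by
  have hcont : Continuous fun t : ℝ => min t (T - t) :=
    continuous_id.min (continuous_const.sub continuous_id)
  have h1 : (∫ t in (0:ℝ)..(T/2), min t (T - t)) = ∫ t in (0:ℝ)..(T/2), t := by
    apply intervalIntegral.integral_congr
    intro y hy
    rw [uIcc_of_le (by linarith)] at hy
    exact min_eq_left (by cases hy; linarith)
  have h2 : (∫ t in (T/2)..T, min t (T - t)) = ∫ t in (T/2)..T, (T - t) := by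
    apply intervalIntegral.integral_congr
    intro y hy
    rw [uIcc_of_le (by linarith)] at hy
    exact min_eq_right (by cases hy; linarith)
  have hadd := intervalIntegral.integral_add_adjacent_intervals
    (a := (0:ℝ)) (b := T/2) (c := T)
    (hcont.intervalIntegrable (μ := volume) _ _) (hcont.intervalIntegrable (μ := volume) _ _)
  rw [← hadd, h1, h2, intervalIntegral.integral_sub intervalIntegrable_const
    intervalIntegral.intervalIntegrable_id, integral_id, integral_id,
    intervalIntegral.integral_const]
  rw [smul_eq_mul]; ring

/-- if `c ≠ 0` and `4|c| = T²`, then `𝓕(T,c)` has exactly one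
element, the broken line `x ↦ sgn(c)·min(x, T − x)`. -/
theorem memF_unique_extremal (T c : ℝ) (hT : 0 < T) (hc : c ≠ 0)
    (hcT : 4 * |c| = T^2) :
    memF T c (fun x => Real.sign c * min x (T - x)) ∧
    ∀ f : ℝ → ℝ, memF T c f →
      EqOn f (fun x => Real.sign c * min x (T - x)) (Icc (0:ℝ) T) := by
  have habs : |c| = T^2/4 := by linarith
  have hgcont : Continuous fun t : ℝ => min t (T - t) :=
    continuous_id.min (continuous_const.sub continuous_id)
  have hglip := aux_tent_lipschitz T
  have hgint := aux_tent_integral T hT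
  have hsign : Real.sign c = 1 ∨ Real.sign c = -1 := by
    rcases lt_or_gt_of_ne hc with h | h
    · exact Or.inr (Real.sign_of_neg h)
    · exact Or.inl (Real.sign_of_pos h)
  have hsignabs : Real.sign c * |c| = c := by
    rcases lt_or_gt_of_ne hc with h | h
    · rw [Real.sign_of_neg h, abs_of_neg h]; ring
    · rw [Real.sign_of_pos h, abs_of_pos h]; ring
  constructor
  · refine ⟨?_, ?_, ?_, ?_⟩
    · have : LipschitzWith 1 fun x : ℝ => Real.sign c * min x (T - x) := by
        rcases hsign with h | h <;> rw [h]
        · simpa using hglip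
        · simp only [neg_one_mul]
          exact hglip.neg
      exact this.lipschitzOnWith
    · simp [min_eq_left hT.le]
    · simp [min_eq_right hT.le]
    · rw [intervalIntegral.integral_const_mul, hgint, ← habs, hsignabs]
  · intro f hf
    obtain ⟨hlip, hf0, hfT, hfint⟩ := hf
    have hfcont : ContinuousOn f (Icc (0:ℝ) T) := hlip.continuousOn
    have hfi : IntervalIntegrable f volume 0 T := by
      apply ContinuousOn.intervalIntegrable
      rwa [uIcc_of_le hT.le]
    have hbound : ∀ x ∈ Icc (0:ℝ) T, |f x| ≤ min x (T - x) := by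
      intro x hx
      have h0 : (0:ℝ) ∈ Icc (0:ℝ) T := ⟨le_refl _, hT.le⟩
      have hTm : T ∈ Icc (0:ℝ) T := ⟨hT.le, le_refl _⟩
      have d1 := hlip.dist_le_mul x hx 0 h0
      have d2 := hlip.dist_le_mul x hx T hTm
      rw [hf0] at d1; rw [hfT] at d2
      rw [Real.dist_eq, Real.dist_eq, sub_zero, sub_zero] at d1
      rw [Real.dist_eq, Real.dist_eq] at d2
      have e1 : |f x| ≤ x := by
        have : |x| = x := abs_of_nonneg hx.1
        simpa [this] using d1
      have e2 : |f x| ≤ T - x := by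
        have : |x - T| = T - x := by rw [abs_sub_comm]; exact abs_of_nonneg (by linarith [hx.2])
        simpa [this] using d2
      exact le_min e1 e2
    rcases lt_or_gt_of_ne hc with hneg | hpos
    · -- c < 0 : f = -tent
      have hs : Real.sign c = -1 := Real.sign_of_neg hneg
      have hca : |c| = -c := abs_of_neg hneg
      set h : ℝ → ℝ := fun x => f x + min x (T - x) with hh
      have hnn : ∀ x ∈ Icc (0:ℝ) T, 0 ≤ h x := by
        intro x hx
        have := (abs_le.mp (hbound x hx)).1
        simp only [hh]; linarith
      have hcont : ContinuousOn h (Icc (0:ℝ) T) := hfcont.add hgcont.continuousOn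
      have hint : (∫ t in (0:ℝ)..T, h t) = 0 := by
        rw [hh]
        rw [intervalIntegral.integral_add hfi (hgcont.intervalIntegrable (μ := volume) _ _), hfint, hgint]
        linarith
      have hz := aux_eq_zero_of_nonneg_of_integral_zero hT hcont hnn hint
      intro x hx
      have := hz x hx
      simp only [hh] at this
      simp only [hs]
      linarith
    · -- c > 0 : f = tent
      have hs : Real.sign c = 1 := Real.sign_of_pos hpos
      have hca : |c| = c := abs_of_pos hpos
      set h : ℝ → ℝ := fun x => min x (T - x) - f x with hh
      have hnn : ∀ x ∈ Icc (0:ℝ) T, 0 ≤ h x := by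
        intro x hx
        have := (abs_le.mp (hbound x hx)).2
        simp only [hh]; linarith
      have hcont : ContinuousOn h (Icc (0:ℝ) T) := hgcont.continuousOn.sub hfcont
      have hint : (∫ t in (0:ℝ)..T, h t) = 0 := by
        rw [hh]
        rw [intervalIntegral.integral_sub (hgcont.intervalIntegrable (μ := volume) _ _) hfi, hfint, hgint]
        linarith
      have hz := aux_eq_zero_of_nonneg_of_integral_zero hT hcont hnn hint
      intro x hx
      have := hz x hx
      simp only [hh] at this
      simp only [hs]
      linarith
end

section
/- Let T > 0 and c ∈ ℝ with c ≠ 0 and 4|c| < T². Let 𝓕'(T,c) ⊆ 𝓕(T,c) be the subset of functions whose Lipschitz constant is strictly less than 1. Then 𝓕'(T,c) is nonempty and sup_{f ∈ 𝓕'(T,c)} L(f) = sup_{f ∈ 𝓕(T,c)} L(f). -/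
/-!
A convex combination `l • f + (1 - l) • h` of a function `f ∈ 𝓕(T,c)` with a function
`h ∈ 𝓕'(T,c)` lies in `𝓕'(T,c)` whenever `l < 1`, and since `x ↦ √(1 - x²)` is concave its
length is at least `l L(f) + (1 - l) L(h) ≥ l L(f)`. Letting `l → 1` shows that `L(f)` is bounded
by the supremum over `𝓕'(T,c)`. A function `h` exists as soon as `4|c| < T²`: the tent over
`[0,T]` of area `c` has slope `4|c|/T²`.
-/

open MeasureTheory Set

/-- `𝓕'(T,c)`: the subset of `𝓕(T,c)` of functions with Lipschitz constant
strictly less than `1`. -/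
def memF' (T c : ℝ) (f : ℝ → ℝ) : Prop :=
  memF T c f ∧ ∃ K : NNReal, (K : ℝ) < 1 ∧ LipschitzOnWith K f (Icc (0:ℝ) T)

/-- The Lorentzian length of the graph of `f` over `[0,T]`. -/
noncomputable def graphLength (T : ℝ) (f : ℝ → ℝ) : ℝ :=
  ∫ t in (0:ℝ)..T, Real.sqrt (1 - (deriv f t)^2)

open Filter Topology

lemma concaveOn_sqrt_one_sub_sq : ConcaveOn ℝ (Icc (-1) 1) fun x : ℝ => √(1 - x ^ 2) := by
  have hpoly : ConcaveOn ℝ (Icc (-1) 1) fun x : ℝ => 1 - x ^ 2 :=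
    (concaveOn_const 1 (convex_Icc _ _)).sub
      (even_two.convexOn_pow.subset (subset_univ _) (convex_Icc _ _))
  refine ConcaveOn.comp (g := Real.sqrt) ?_ hpoly fun _ _ _ _ h => Real.sqrt_le_sqrt h
  refine Real.strictConcaveOn_sqrt.concaveOn.subset ?_
    (isPreconnected_Icc.image _ (by fun_prop)).ordConnected.convex
  rintro _ ⟨x, hx, rfl⟩
  exact sub_nonneg.2 ((sq_le_one_iff_abs_le_one x).2 (abs_le.2 hx))

lemma sqrt_one_sub_sq_le_one (x : ℝ) : √(1 - x ^ 2) ≤ 1 :=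
  Real.sqrt_le_one.2 (by nlinarith [sq_nonneg x])

theorem LipschitzOnWith.ae_differentiableAt_of_mem_of_isOpen {E F : Type*}
    [NormedAddCommGroup E] [NormedSpace ℝ E] [FiniteDimensional ℝ E] [MeasurableSpace E]
    [BorelSpace E] [NormedAddCommGroup F] [NormedSpace ℝ F] [FiniteDimensional ℝ F]
    {μ : Measure E} [μ.IsAddHaarMeasure] {C : NNReal} {f : E → F} {s : Set E}
    (hf : LipschitzOnWith C f s) (hs : IsOpen s) :
    ∀ᵐ x ∂μ, x ∈ s → DifferentiableAt ℝ f x := by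
  filter_upwards [hf.ae_differentiableWithinAt_of_mem] with x hx xs
  exact (hx xs).differentiableAt (hs.mem_nhds xs)

theorem LipschitzOnWith.convex_combination {α : Type*} [PseudoEMetricSpace α] {f g : α → ℝ}
    {s : Set α} {Kf Kg : NNReal} (hf : LipschitzOnWith Kf f s) (hg : LipschitzOnWith Kg g s)
    {l : ℝ} (hl0 : 0 ≤ l) (hl1 : l ≤ 1) :
    LipschitzOnWith (l * Kf + (1 - l) * Kg).toNNReal (fun x => l * f x + (1 - l) * g x) s := by
  have hK : (l * Kf + (1 - l) * Kg).toNNReal = ‖l‖₊ * Kf + ‖1 - l‖₊ * Kg := by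
    rw [← NNReal.coe_inj, Real.coe_toNNReal _ (by positivity)]
    simp [abs_of_nonneg hl0, abs_of_nonneg (sub_nonneg.2 hl1)]
  rw [hK]
  exact ((lipschitzWith_smul l).comp_lipschitzOnWith hf).add
    ((lipschitzWith_smul (1 - l)).comp_lipschitzOnWith hg)

lemma intervalIntegrable_sqrt_one_sub_deriv_sq (f : ℝ → ℝ) (a b : ℝ) :
    IntervalIntegrable (fun t => √(1 - deriv f t ^ 2)) volume a b :=
  (intervalIntegrable_const (c := (1 : ℝ))).mono_fun'
    (measurable_const.sub ((measurable_deriv f).pow_const 2)).sqrt.aestronglyMeasurable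
    (ae_of_all _ fun t => by
      simpa [Real.norm_of_nonneg (Real.sqrt_nonneg _)] using sqrt_one_sub_sq_le_one (deriv f t))

lemma graphLength_nonneg {T : ℝ} (hT : 0 ≤ T) (f : ℝ → ℝ) : 0 ≤ graphLength T f :=
  intervalIntegral.integral_nonneg hT fun _ _ => Real.sqrt_nonneg _

lemma graphLength_le {T : ℝ} (hT : 0 ≤ T) (f : ℝ → ℝ) : graphLength T f ≤ T := by
  refine (intervalIntegral.integral_mono_on hT (intervalIntegrable_sqrt_one_sub_deriv_sq f 0 T)
    intervalIntegrable_const fun t _ => sqrt_one_sub_sq_le_one (deriv f t)).trans_eq ?_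
  simp

lemma sqrt_one_sub_deriv_sq_convex_combination_ge {f g : ℝ → ℝ} {s : Set ℝ} {x l : ℝ}
    (hs : s ∈ 𝓝 x) (hf : LipschitzOnWith 1 f s) (hg : LipschitzOnWith 1 g s)
    (hfx : DifferentiableAt ℝ f x) (hgx : DifferentiableAt ℝ g x) (hl0 : 0 ≤ l) (hl1 : l ≤ 1) :
    l * √(1 - deriv f x ^ 2) + (1 - l) * √(1 - deriv g x ^ 2) ≤
      √(1 - deriv (fun t => l * f t + (1 - l) * g t) x ^ 2) := by
  have hbound {φ : ℝ → ℝ} (hφ : LipschitzOnWith 1 φ s) : deriv φ x ∈ Icc (-1) 1 :=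
    abs_le.1 (by simpa using norm_deriv_le_of_lipschitzOn hs hφ)
  have hderiv : HasDerivAt (fun t => l * f t + (1 - l) * g t)
      (l * deriv f x + (1 - l) * deriv g x) x :=
    (hfx.hasDerivAt.const_mul l).add (hgx.hasDerivAt.const_mul (1 - l))
  rw [hderiv.deriv]
  exact concaveOn_sqrt_one_sub_sq.2 (hbound hf) (hbound hg) hl0 (sub_nonneg.2 hl1) (by ring)

lemma graphLength_convex_combination_ge {T l : ℝ} {f g : ℝ → ℝ} (hT : 0 ≤ T)
    (hf : LipschitzOnWith 1 f (Icc 0 T)) (hg : LipschitzOnWith 1 g (Icc 0 T))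
    (hl0 : 0 ≤ l) (hl1 : l ≤ 1) :
    l * graphLength T f + (1 - l) * graphLength T g ≤
      graphLength T fun t => l * f t + (1 - l) * g t := by
  have hint := intervalIntegrable_sqrt_one_sub_deriv_sq
  rw [graphLength, graphLength, ← intervalIntegral.integral_const_mul,
    ← intervalIntegral.integral_const_mul, ← intervalIntegral.integral_add
      ((hint f 0 T).const_mul l) ((hint g 0 T).const_mul (1 - l))]
  refine intervalIntegral.integral_mono_ae_restrict hT
    (((hint f 0 T).const_mul l).add ((hint g 0 T).const_mul (1 - l))) (hint _ 0 T) ?_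
  rw [EventuallyLE, ← Measure.restrict_congr_set Ioo_ae_eq_Icc,
    ae_restrict_iff' measurableSet_Ioo]
  filter_upwards [(hf.mono Ioo_subset_Icc_self).ae_differentiableAt_of_mem_of_isOpen isOpen_Ioo,
    (hg.mono Ioo_subset_Icc_self).ae_differentiableAt_of_mem_of_isOpen isOpen_Ioo]
    with t hft hgt ht
  exact sqrt_one_sub_deriv_sq_convex_combination_ge (Icc_mem_nhds ht.1 ht.2) hf hg (hft ht)
    (hgt ht) hl0 hl1

lemma memF.convex_combination {T c l : ℝ} {f g : ℝ → ℝ} (hT : 0 ≤ T) (hf : memF T c f)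
    (hg : memF T c g) (hl0 : 0 ≤ l) (hl1 : l ≤ 1) :
    memF T c fun t => l * f t + (1 - l) * g t := by
  obtain ⟨hf1, hf0, hfT, hfc⟩ := hf
  obtain ⟨hg1, hg0, hgT, hgc⟩ := hg
  refine ⟨(hf1.convex_combination hg1 hl0 hl1).weaken (by simp), by simp [hf0, hg0],
    by simp [hfT, hgT], ?_⟩
  rw [intervalIntegral.integral_add
      ((hf1.continuousOn.intervalIntegrable_of_Icc hT).const_mul l)
      ((hg1.continuousOn.intervalIntegrable_of_Icc hT).const_mul (1 - l)),
    intervalIntegral.integral_const_mul, intervalIntegral.integral_const_mul, hfc, hgc]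
  ring

lemma memF'.convex_combination {T c l : ℝ} {f g : ℝ → ℝ} (hT : 0 ≤ T) (hf : memF T c f)
    (hg : memF' T c g) (hl0 : 0 ≤ l) (hl1 : l < 1) :
    memF' T c fun t => l * f t + (1 - l) * g t := by
  obtain ⟨hgF, K, hK, hgK⟩ := hg
  refine ⟨hf.convex_combination hT hgF hl0 hl1.le, _, ?_, hf.1.convex_combination hgK hl0 hl1.le⟩
  rw [Real.coe_toNNReal _ (by positivity), NNReal.coe_one]
  nlinarith

lemma integral_min_self_sub {T : ℝ} (hT : 0 ≤ T) :
    ∫ t in (0:ℝ)..T, min t (T - t) = T ^ 2 / 4 := by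
  have hint : ∀ a b : ℝ, IntervalIntegrable (fun t => min t (T - t)) volume a b :=
    fun a b => (continuous_id.min (continuous_const.sub continuous_id)).intervalIntegrable a b
  have hleft : ∫ t in (0:ℝ)..T / 2, min t (T - t) = ∫ t in (0:ℝ)..T / 2, t := by
    refine intervalIntegral.integral_congr fun t ht => ?_
    rw [uIcc_of_le (by linarith)] at ht
    exact min_eq_left (by linarith [ht.2])
  have hright : ∫ t in T / 2..T, min t (T - t) = ∫ t in T / 2..T, (T - t) := by
    refine intervalIntegral.integral_congr fun t ht => ?_
    rw [uIcc_of_le (by linarith)] at ht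
    exact min_eq_right (by linarith [ht.1])
  rw [← intervalIntegral.integral_add_adjacent_intervals (hint 0 (T / 2)) (hint (T / 2) T),
    hleft, hright, intervalIntegral.integral_comp_sub_left (fun t => t)]
  simp only [integral_id]
  ring

lemma memF'_tent {T c : ℝ} (hT : 0 < T) (hcT : 4 * |c| < T ^ 2) :
    memF' T c fun t => 4 * c / T ^ 2 * min t (T - t) := by
  set s := 4 * c / T ^ 2 with hs
  have hslope : (‖s‖₊ : ℝ) < 1 := by
    rw [coe_nnnorm, Real.norm_eq_abs, hs, abs_div, abs_mul,
      abs_of_pos (by positivity : (0:ℝ) < T ^ 2), div_lt_one (by positivity)]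
    simpa using hcT
  have htent : LipschitzWith 1 fun t : ℝ => min t (T - t) := by
    simpa using LipschitzWith.id.min ((LipschitzWith.const T).sub LipschitzWith.id)
  have hlip : LipschitzWith (‖s‖₊ * 1) fun t : ℝ => s * min t (T - t) :=
    (lipschitzWith_smul s).comp htent
  rw [mul_one] at hlip
  refine ⟨⟨hlip.lipschitzOnWith.weaken (by exact_mod_cast hslope.le), by simp [hT.le],
    by simp [hT.le], ?_⟩, _, hslope, hlip.lipschitzOnWith⟩
  rw [intervalIntegral.integral_const_mul, integral_min_self_sub hT.le, hs]
  field_simp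

theorem sup_length_F'_eq_sup_length_F_general (T c : ℝ) (hT : 0 < T)
    (hcT : 4 * |c| < T^2) :
    (∃ f : ℝ → ℝ, memF' T c f) ∧
    sSup (graphLength T '' {f | memF' T c f}) =
      sSup (graphLength T '' {f | memF T c f}) := by
  have h₀ := memF'_tent hT hcT
  have hbdd : BddAbove (graphLength T '' {f | memF T c f}) :=
    ⟨T, forall_mem_image.2 fun f _ => graphLength_le hT.le f⟩
  have hsub : graphLength T '' {f | memF' T c f} ⊆ graphLength T '' {f | memF T c f} :=
    image_mono fun _ hf => hf.1
  refine ⟨⟨_, h₀⟩, le_antisymm (csSup_le_csSup hbdd ⟨_, _, h₀, rfl⟩ hsub)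
    (csSup_le ⟨_, _, h₀.1, rfl⟩ ?_)⟩
  rintro _ ⟨f, hf, rfl⟩
  have hlim : Tendsto (fun l : ℝ => l * graphLength T f) (𝓝[<] 1) (𝓝 (graphLength T f)) :=
    ((continuous_mul_const _).tendsto' 1 _ (one_mul _)).mono_left nhdsWithin_le_nhds
  refine le_of_tendsto hlim ?_
  filter_upwards [Ioo_mem_nhdsLT zero_lt_one] with l hl
  calc l * graphLength T f
      ≤ l * graphLength T f + (1 - l) * graphLength T _ :=
        le_add_of_nonneg_right (mul_nonneg (sub_nonneg.2 hl.2.le) (graphLength_nonneg hT.le _))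
    _ ≤ graphLength T _ := graphLength_convex_combination_ge hT.le hf.1 h₀.1.1 hl.1.le hl.2.le
    _ ≤ _ := le_csSup (hbdd.mono hsub) ⟨_, memF'.convex_combination hT.le hf h₀ hl.1.le hl.2, rfl⟩

/-- for `c ≠ 0` and `4|c| < T²`, the set `𝓕'(T,c)` is nonempty and
the supremum of the Lorentzian length over `𝓕'(T,c)` equals the supremum over
`𝓕(T,c)`. -/
theorem sup_length_F'_eq_sup_length_F (T c : ℝ) (hT : 0 < T) (hc : c ≠ 0)
    (hcT : 4 * |c| < T^2) :
    (∃ f : ℝ → ℝ, memF' T c f) ∧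
    sSup (graphLength T '' {f | memF' T c f}) =
      sSup (graphLength T '' {f | memF T c f}) :=
  sup_length_F'_eq_sup_length_F_general T c hT hcT
end
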